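/- arXiv:0911.3970 — 3 statements merged into one kernel-verified Lean document; each statement's English description precedes it below -/
import Mathlib

section
/- Assume L²(Ω₁,ν₁) and L²(Ω₂,ν₂) are infinite-dimensional. Then |σ_d(T)| ≤ |σ_d(K₁)| · |σ_d(K₂)|, where |·| denotes the cardinality of a set. -/
open MeasureTheory Filter Topology Metric

noncomputable section

variable {𝓗 : Type*} [NormedAddCommGroup 𝓗] [InnerProductSpace ℂ 𝓗]

/-- `z` is an isolated point of the set `S`. -/
def IsIsolatedIn (S : Set ℂ) (z : ℂ) : Prop :=
  z ∈ S ∧ ∃ ε > 0, S ∩ Metric.ball z ε = {z}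

/-- Discrete spectrum: the set of isolated points of the spectrum that are eigenvalues of
finite multiplicity. -/
def discreteSpectrum (A : 𝓗 →L[ℂ] 𝓗) : Set ℂ :=
  {z | IsIsolatedIn (spectrum ℂ A) z ∧
    Module.End.HasEigenvalue (A : 𝓗 →ₗ[ℂ] 𝓗) z ∧
    FiniteDimensional ℂ (Module.End.eigenspace (A : 𝓗 →ₗ[ℂ] 𝓗) z)}

/-- Essential spectrum: spectrum minus discrete spectrum. -/
def essSpectrum (A : 𝓗 →L[ℂ] 𝓗) : Set ℂ :=
  spectrum ℂ A \ discreteSpectrum A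

/-- Bottom of the essential spectrum (as a real number). -/
def Emin (A : 𝓗 →L[ℂ] 𝓗) : ℝ :=
  sInf {x : ℝ | (x : ℂ) ∈ essSpectrum A}

/-- The span of all eigenspaces with (real) eigenvalue strictly below `E`; its dimension is
the number of eigenvalues below `E` counted with multiplicity. -/
def eigBelow (A : 𝓗 →L[ℂ] 𝓗) (E : ℝ) : Submodule ℂ 𝓗 :=
  ⨆ t : {t : ℝ // t < E}, Module.End.eigenspace (A : 𝓗 →ₗ[ℂ] 𝓗) ((t : ℝ) : ℂ)


/-!
`T₁` and `T₂` commute (Fubini), so the finite-dimensional eigenspace of `T = T₁ + T₂` at a point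
`λ` of `σ_d(T)` contains a common eigenvector `v`, with `T₁ v = μ₁ v`, `T₂ v = μ₂ v` and
`λ = μ₁ + μ₂`; a nonzero slice of `v` in one variable is an eigenvector of `K₁` (resp. `K₂`).
Tensoring with a fixed eigenvector `g` of `K₂` at `μ₂` embeds the eigenspace of `K₁` at `μ₁` into
that of `T` at `λ`, and turns approximate eigenvectors of `K₁` at `z` (which exist for every
`z ∈ σ(K₁)` since `K₁` is self-adjoint) into approximate eigenvectors of `T` at `z + μ₂`. Hence
`μ₁` is an isolated eigenvalue of finite multiplicity of `K₁`, and symmetrically for `μ₂`, so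
`σ_d(T) ⊆ σ_d(K₁) + σ_d(K₂)`.
-/

open ContinuousLinearMap

section Spectrum

lemma IsIsolatedIn.of_forall_add_mem {S S' : Set ℂ} {z w : ℂ} (h : IsIsolatedIn S' (z + w))
    (hz : z ∈ S) (hS : ∀ x ∈ S, x + w ∈ S') : IsIsolatedIn S z := by
  obtain ⟨-, ε, hε, hball⟩ := h
  refine ⟨hz, ε, hε, Set.eq_singleton_iff_unique_mem.2 ⟨⟨hz, mem_ball_self hε⟩, ?_⟩⟩
  rintro x ⟨hxS, hxz⟩
  have hmem : x + w ∈ S' ∩ ball (z + w) ε := ⟨hS x hxS, by simpa [dist_add_right] using hxz⟩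
  rw [hball] at hmem
  exact add_right_cancel hmem

lemma mem_spectrum_of_forall_exists_norm_sub_smul_lt {𝕜 E : Type*} [NontriviallyNormedField 𝕜]
    [NormedAddCommGroup E] [NormedSpace 𝕜 E] {A : E →L[𝕜] E} {z : 𝕜}
    (h : ∀ ε > 0, ∃ u, ‖A u - z • u‖ < ε * ‖u‖) : z ∈ spectrum 𝕜 A := by
  intro hunit
  set R : E →L[𝕜] E := ↑hunit.unit⁻¹
  have hRu : ∀ v, R (z • v - A v) = v := fun v => by
    have := DFunLike.congr_fun hunit.unit.inv_mul v
    rw [mul_apply_eq_comp, hunit.unit_spec] at this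
    simpa [Algebra.algebraMap_eq_smul_one] using this
  obtain ⟨u, hu⟩ := h (‖R‖ + 1)⁻¹ (by positivity)
  have hle : ‖u‖ ≤ ‖R‖ * ‖A u - z • u‖ := calc
    ‖u‖ = ‖R (-(A u - z • u))‖ := by rw [neg_sub, hRu]
    _ ≤ ‖R‖ * ‖A u - z • u‖ := by rw [map_neg, norm_neg]; exact R.le_opNorm _
  rw [inv_mul_eq_div, lt_div_iff₀ (by positivity)] at hu
  nlinarith [norm_nonneg (A u - z • u)]

variable {H : Type*} [NormedAddCommGroup H] [InnerProductSpace ℂ H] [CompleteSpace H]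

lemma IsSelfAdjoint.isUnit_of_forall_mul_norm_le {B : H →L[ℂ] H} (hB : IsSelfAdjoint B) {c : ℝ}
    (hc : 0 < c) (h : ∀ u, c * ‖u‖ ≤ ‖B u‖) : IsUnit B := by
  have hinj : ∀ u, B u = 0 → u = 0 := fun u hu => by
    have := h u
    rw [hu, norm_zero] at this
    exact norm_le_zero_iff.1 (by nlinarith [norm_nonneg u])
  rw [isUnit_iff_bijective, bijective_iff_dense_range_and_antilipschitz]
  refine ⟨?_, ⟨⟨c⁻¹, by positivity⟩, B.antilipschitz_of_bound fun u => ?_⟩⟩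
  · rw [Submodule.topologicalClosure_eq_top_iff, Submodule.eq_bot_iff]
    intro u hu
    refine hinj u ((inner_self_eq_zero (𝕜 := ℂ)).1 ?_)
    have := hB.isSymmetric (B u) u
    simp only [coe_coe] at this
    rw [← this]
    exact Submodule.inner_right_of_mem_orthogonal (LinearMap.mem_range_self _ _) hu
  · change ‖u‖ ≤ c⁻¹ * ‖B u‖
    rw [inv_mul_eq_div, le_div_iff₀ hc, mul_comm]
    exact h u

lemma IsSelfAdjoint.exists_norm_sub_smul_lt {A : H →L[ℂ] H} (hA : IsSelfAdjoint A) {z : ℂ}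
    (hz : z ∈ spectrum ℂ A) {ε : ℝ} (hε : 0 < ε) : ∃ u, ‖A u - z • u‖ < ε * ‖u‖ := by
  by_contra! hbdd
  -- `z` is real, so `A - z` is again self-adjoint.
  have hsa : IsSelfAdjoint (A - algebraMap ℂ (H →L[ℂ] H) z) := by
    rw [hA.mem_spectrum_eq_re hz, ← Complex.coe_algebraMap, ← IsScalarTower.algebraMap_apply]
    exact hA.sub (.algebraMap _ (.all _))
  refine hz (IsUnit.sub_iff.1 (hsa.isUnit_of_forall_mul_norm_le hε fun u => ?_))
  simpa [Algebra.algebraMap_eq_smul_one] using hbdd u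

end Spectrum

lemma Module.End.exists_hasEigenvector_of_commute {K V : Type*} [Field K] [IsAlgClosed K]
    [AddCommGroup V] [Module K V] {f g : Module.End K V} (hfg : Commute f g) {z : K}
    (hz : (f + g).HasEigenvalue z) [FiniteDimensional K ((f + g).eigenspace z)] :
    ∃ μ₁ μ₂ v, μ₁ + μ₂ = z ∧ f.HasEigenvector μ₁ v ∧ g.HasEigenvector μ₂ v := by
  have hmaps : Set.MapsTo f ((f + g).eigenspace z) ((f + g).eigenspace z) :=
    Module.End.mapsTo_genEigenspace_of_comm ((Commute.refl f).add_left hfg.symm) z 1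
  have : Nontrivial ((f + g).eigenspace z) := Submodule.nontrivial_iff_ne_bot.2 hz
  obtain ⟨μ, hμ⟩ := Module.End.exists_eigenvalue (f.restrict hmaps)
  obtain ⟨⟨v, hvz⟩, hv⟩ := hμ.exists_hasEigenvector
  have hfv : f v = μ • v := congrArg Subtype.val hv.apply_eq_smul
  have hv0 : v ≠ 0 := fun h => hv.2 (Subtype.ext h)
  have hgv : g v = (z - μ) • v := by
    rw [sub_smul, ← Module.End.mem_eigenspace_iff.1 hvz, ← hfv, LinearMap.add_apply,
      add_sub_cancel_left]
  exact ⟨μ, z - μ, v, add_sub_cancel _ _, ⟨Module.End.mem_eigenspace_iff.2 hfv, hv0⟩,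
    ⟨Module.End.mem_eigenspace_iff.2 hgv, hv0⟩⟩

section TensorSpectrum

variable {H₁ H₂ H : Type*} [NormedAddCommGroup H₁] [InnerProductSpace ℂ H₁]
  [NormedAddCommGroup H₂] [InnerProductSpace ℂ H₂] [NormedAddCommGroup H] [InnerProductSpace ℂ H]
  {B : H₁ →ₗ[ℂ] H₂ →ₗ[ℂ] H} {K₁ : H₁ →L[ℂ] H₁} {K₂ : H₂ →L[ℂ] H₂} {T : H →L[ℂ] H}
  {g : H₂} {μ₁ μ₂ : ℂ}

lemma finiteDimensional_eigenspace_of_tensor (hB : ∀ x y, ‖B x y‖ = ‖x‖ * ‖y‖)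
    (hT : ∀ x y, T (B x y) = B (K₁ x) y + B x (K₂ y)) (hg : g ≠ 0) (hKg : K₂ g = μ₂ • g)
    [FiniteDimensional ℂ (Module.End.eigenspace (T : H →ₗ[ℂ] H) (μ₁ + μ₂))] :
    FiniteDimensional ℂ (Module.End.eigenspace (K₁ : H₁ →ₗ[ℂ] H₁) μ₁) := by
  have hmaps : ∀ φ ∈ Module.End.eigenspace (K₁ : H₁ →ₗ[ℂ] H₁) μ₁,
      B.flip g φ ∈ Module.End.eigenspace (T : H →ₗ[ℂ] H) (μ₁ + μ₂) := fun φ hφ => by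
    rw [Module.End.mem_eigenspace_iff] at hφ ⊢
    simp only [coe_coe, LinearMap.flip_apply] at hφ ⊢
    rw [hT, hφ, hKg, map_smul, map_smul, LinearMap.smul_apply, add_smul]
  refine FiniteDimensional.of_injective ((B.flip g).restrict hmaps) fun φ ψ h => ?_
  have hB0 : B ((φ : H₁) - ψ) g = 0 := by
    simpa [sub_eq_zero, LinearMap.coe_restrict_apply] using congrArg Subtype.val h
  rw [← norm_eq_zero, hB, mul_eq_zero, norm_eq_zero, norm_eq_zero, sub_eq_zero] at hB0
  exact Subtype.ext (hB0.resolve_right hg)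

lemma add_mem_spectrum_of_tensor [CompleteSpace H₁] (hB : ∀ x y, ‖B x y‖ = ‖x‖ * ‖y‖)
    (hT : ∀ x y, T (B x y) = B (K₁ x) y + B x (K₂ y)) (hK₁ : IsSelfAdjoint K₁) (hg : g ≠ 0)
    (hKg : K₂ g = μ₂ • g) {z : ℂ} (hz : z ∈ spectrum ℂ K₁) : z + μ₂ ∈ spectrum ℂ T := by
  refine mem_spectrum_of_forall_exists_norm_sub_smul_lt fun ε hε => ?_
  obtain ⟨u, hu⟩ := hK₁.exists_norm_sub_smul_lt hz hε
  refine ⟨B u g, ?_⟩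
  have hTu : T (B u g) - (z + μ₂) • B u g = B (K₁ u - z • u) g := by
    rw [hT, hKg, map_smul, map_sub, map_smul, LinearMap.sub_apply, LinearMap.smul_apply,
      add_smul]
    abel
  rw [hTu, hB, hB, ← mul_assoc]
  exact mul_lt_mul_of_pos_right hu (norm_pos_iff.2 hg)

lemma mem_discreteSpectrum_of_tensor_left [CompleteSpace H₁] (hB : ∀ x y, ‖B x y‖ = ‖x‖ * ‖y‖)
    (hT : ∀ x y, T (B x y) = B (K₁ x) y + B x (K₂ y)) (hK₁ : IsSelfAdjoint K₁)
    (hμ₁ : Module.End.HasEigenvalue (K₁ : H₁ →ₗ[ℂ] H₁) μ₁)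
    (hμ₂ : Module.End.HasEigenvalue (K₂ : H₂ →ₗ[ℂ] H₂) μ₂) (hμ : μ₁ + μ₂ ∈ discreteSpectrum T) :
    μ₁ ∈ discreteSpectrum K₁ := by
  obtain ⟨hiso, -, hfin⟩ := hμ
  obtain ⟨g, hg⟩ := hμ₂.exists_hasEigenvector
  refine ⟨hiso.of_forall_add_mem (spectrum_eq (f := K₁) ▸ hμ₁.mem_spectrum) fun z hz =>
    add_mem_spectrum_of_tensor hB hT hK₁ hg.2 hg.apply_eq_smul hz, hμ₁, ?_⟩
  exact finiteDimensional_eigenspace_of_tensor hB hT hg.2 hg.apply_eq_smul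

lemma mem_discreteSpectrum_of_tensor_right [CompleteSpace H₂] (hB : ∀ x y, ‖B x y‖ = ‖x‖ * ‖y‖)
    (hT : ∀ x y, T (B x y) = B (K₁ x) y + B x (K₂ y)) (hK₂ : IsSelfAdjoint K₂)
    (hμ₁ : Module.End.HasEigenvalue (K₁ : H₁ →ₗ[ℂ] H₁) μ₁)
    (hμ₂ : Module.End.HasEigenvalue (K₂ : H₂ →ₗ[ℂ] H₂) μ₂) (hμ : μ₁ + μ₂ ∈ discreteSpectrum T) :
    μ₂ ∈ discreteSpectrum K₂ := by
  refine mem_discreteSpectrum_of_tensor_left (B := B.flip) (fun y x => ?_) (fun y x => ?_) hK₂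
    hμ₂ hμ₁ (by rwa [add_comm])
  · rw [LinearMap.flip_apply, hB, mul_comm]
  · simp only [LinearMap.flip_apply]
    rw [hT, add_comm]

end TensorSpectrum

section L2Tensor

open ENNReal

variable {X Y : Type*} [MeasurableSpace X] [MeasurableSpace Y] {μ : Measure X} {ν : Measure Y}
  [SFinite ν]

lemma eLpNorm_mul_prod {𝕜 : Type*} [NormedField 𝕜] {p : ℝ≥0∞} (hp0 : p ≠ 0) (hp : p ≠ ∞)
    {f : X → 𝕜} {g : Y → 𝕜} (hf : AEStronglyMeasurable f μ) (hg : AEStronglyMeasurable g ν) :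
    eLpNorm (fun z => f z.1 * g z.2) p (μ.prod ν) = eLpNorm f p μ * eLpNorm g p ν := by
  simp only [eLpNorm_eq_lintegral_rpow_enorm_toReal hp0 hp, enorm_mul,
    ENNReal.mul_rpow_of_nonneg _ _ ENNReal.toReal_nonneg]
  rw [lintegral_prod_mul (hf.enorm.pow_const _) (hg.enorm.pow_const _),
    ENNReal.mul_rpow_of_nonneg _ _ (by positivity)]

lemma MeasureTheory.MemLp.mul_prod {𝕜 : Type*} [NormedField 𝕜] {p : ℝ≥0∞} (hp0 : p ≠ 0)
    (hp : p ≠ ∞) {f : X → 𝕜} {g : Y → 𝕜} (hf : MemLp f p μ) (hg : MemLp g p ν) :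
    MemLp (fun z => f z.1 * g z.2) p (μ.prod ν) :=
  ⟨hf.1.comp_fst.mul hg.1.comp_snd, by
    rw [eLpNorm_mul_prod hp0 hp hf.1 hg.1]; exact ENNReal.mul_lt_top hf.2 hg.2⟩

lemma MeasureTheory.MemLp.prod_right_ae [SFinite μ] {E : Type*} [NormedAddCommGroup E]
    {p : ℝ≥0∞} (hp0 : p ≠ 0) (hp : p ≠ ∞) {f : X × Y → E} (hf : MemLp f p (μ.prod ν)) :
    ∀ᵐ x ∂μ, MemLp (fun y => f (x, y)) p ν := by
  filter_upwards [hf.1.prodMk_left, ((integrable_norm_rpow_iff hf.1 hp0 hp).2 hf).prod_right_ae]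
    with x hx hint
  exact (integrable_norm_rpow_iff hx hp0 hp).1 hint

lemma MeasureTheory.AEStronglyMeasurable.ae_eq_zero_of_ae_ae_eq_zero {E : Type*}
    [NormedAddCommGroup E] {f : X × Y → E} (hf : AEStronglyMeasurable f (μ.prod ν))
    (h : ∀ᵐ x ∂μ, (fun y => f (x, y)) =ᵐ[ν] 0) : f =ᵐ[μ.prod ν] 0 := by
  refine hf.ae_eq_mk.trans ((Measure.ae_prod_iff_ae_ae
    (hf.stronglyMeasurable_mk.measurableSet_eq_fun stronglyMeasurable_const)).2 ?_)
  filter_upwards [Measure.ae_ae_eq_curry_of_prod hf.ae_eq_mk, h] with x h₁ h₂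
  exact h₁.symm.trans h₂

variable (μ ν) in
def tensLp : Lp ℂ 2 μ →ₗ[ℂ] Lp ℂ 2 ν →ₗ[ℂ] Lp ℂ 2 (μ.prod ν) :=
  LinearMap.mk₂ ℂ
    (fun φ g => ((Lp.memLp φ).mul_prod two_ne_zero ofNat_ne_top (Lp.memLp g)).toLp _)
    (fun φ φ' g => by
      rw [← MemLp.toLp_add, MemLp.toLp_eq_toLp_iff]
      filter_upwards [Measure.quasiMeasurePreserving_fst.ae (Lp.coeFn_add φ φ')] with p hp
      simp only [Pi.add_apply]
      rw [hp, Pi.add_apply, add_mul])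
    (fun c φ g => by
      rw [← MemLp.toLp_const_smul, MemLp.toLp_eq_toLp_iff]
      filter_upwards [Measure.quasiMeasurePreserving_fst.ae (Lp.coeFn_smul c φ)] with p hp
      simp [hp, mul_assoc])
    (fun φ g g' => by
      rw [← MemLp.toLp_add, MemLp.toLp_eq_toLp_iff]
      filter_upwards [Measure.quasiMeasurePreserving_snd.ae (Lp.coeFn_add g g')] with p hp
      simp only [Pi.add_apply]
      rw [hp, Pi.add_apply, mul_add])
    (fun c φ g => by
      rw [← MemLp.toLp_const_smul, MemLp.toLp_eq_toLp_iff]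
      filter_upwards [Measure.quasiMeasurePreserving_snd.ae (Lp.coeFn_smul c g)] with p hp
      simp [hp, mul_left_comm])

lemma coeFn_tensLp (φ : Lp ℂ 2 μ) (g : Lp ℂ 2 ν) :
    tensLp μ ν φ g =ᵐ[μ.prod ν] fun p => φ p.1 * g p.2 :=
  MemLp.coeFn_toLp ((Lp.memLp φ).mul_prod two_ne_zero ofNat_ne_top (Lp.memLp g))

lemma norm_tensLp (φ : Lp ℂ 2 μ) (g : Lp ℂ 2 ν) : ‖tensLp μ ν φ g‖ = ‖φ‖ * ‖g‖ := by
  rw [tensLp, LinearMap.mk₂_apply, Lp.norm_toLp, eLpNorm_mul_prod two_ne_zero ofNat_ne_top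
    (Lp.aestronglyMeasurable φ) (Lp.aestronglyMeasurable g), ENNReal.toReal_mul, Lp.norm_def,
    Lp.norm_def]

end L2Tensor

section IntegralOperators

variable {X Y : Type*} [MeasurableSpace X] [MeasurableSpace Y] {μ : Measure X} {ν : Measure Y}
  [SFinite ν]

lemma ae_integral_kernel_snd_congr {F G : X × Y → ℂ} (h : F =ᵐ[μ.prod ν] G) (k : Y → Y → ℂ) :
    ∀ᵐ p ∂μ.prod ν, ∫ t, k p.2 t * F (p.1, t) ∂ν = ∫ t, k p.2 t * G (p.1, t) ∂ν := by
  filter_upwards [Measure.quasiMeasurePreserving_fst.ae (Measure.ae_ae_of_ae_prod h)] with p hp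
  exact integral_congr_ae (hp.mono fun t ht => congrArg (k p.2 t * ·) ht)

lemma apply_tensLp_of_integral_kernel_snd {k : Y → Y → ℂ} {K : Lp ℂ 2 ν →L[ℂ] Lp ℂ 2 ν}
    {T : Lp ℂ 2 (μ.prod ν) →L[ℂ] Lp ℂ 2 (μ.prod ν)}
    (hK : ∀ g : Lp ℂ 2 ν, K g =ᵐ[ν] fun y => ∫ t, k y t * g t ∂ν)
    (hT : ∀ f : Lp ℂ 2 (μ.prod ν), T f =ᵐ[μ.prod ν] fun p => ∫ t, k p.2 t * f (p.1, t) ∂ν)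
    (φ : Lp ℂ 2 μ) (g : Lp ℂ 2 ν) : T (tensLp μ ν φ g) = tensLp μ ν φ (K g) := by
  refine Lp.ext ?_
  filter_upwards [hT _, ae_integral_kernel_snd_congr (coeFn_tensLp φ g) k,
    Measure.quasiMeasurePreserving_snd.ae (hK g), coeFn_tensLp φ (K g)] with p h₁ h₂ h₃ h₄
  rw [h₁, h₂, h₄, h₃, ← integral_const_mul]
  simp_rw [mul_left_comm]

variable [SFinite μ]

lemma ae_integral_kernel_fst_congr {F G : X × Y → ℂ} (h : F =ᵐ[μ.prod ν] G) (k : X → X → ℂ) :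
    ∀ᵐ p ∂μ.prod ν, ∫ s, k p.1 s * F (s, p.2) ∂μ = ∫ s, k p.1 s * G (s, p.2) ∂μ := by
  have hslice : ∀ᵐ y ∂ν, ∀ᵐ s ∂μ, F (s, y) = G (s, y) := Measure.ae_ae_of_ae_prod
    ((Measure.measurePreserving_swap (μ := ν) (ν := μ)).quasiMeasurePreserving.ae h)
  filter_upwards [Measure.quasiMeasurePreserving_snd.ae hslice] with p hp
  exact integral_congr_ae (hp.mono fun s hs => congrArg (k p.1 s * ·) hs)

lemma apply_tensLp_of_integral_kernel_fst {k : X → X → ℂ} {K : Lp ℂ 2 μ →L[ℂ] Lp ℂ 2 μ}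
    {T : Lp ℂ 2 (μ.prod ν) →L[ℂ] Lp ℂ 2 (μ.prod ν)}
    (hK : ∀ φ : Lp ℂ 2 μ, K φ =ᵐ[μ] fun x => ∫ s, k x s * φ s ∂μ)
    (hT : ∀ f : Lp ℂ 2 (μ.prod ν), T f =ᵐ[μ.prod ν] fun p => ∫ s, k p.1 s * f (s, p.2) ∂μ)
    (φ : Lp ℂ 2 μ) (g : Lp ℂ 2 ν) : T (tensLp μ ν φ g) = tensLp μ ν (K φ) g := by
  refine Lp.ext ?_
  filter_upwards [hT _, ae_integral_kernel_fst_congr (coeFn_tensLp φ g) k,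
    Measure.quasiMeasurePreserving_fst.ae (hK φ), coeFn_tensLp (K φ) g] with p h₁ h₂ h₃ h₄
  rw [h₁, h₂, h₄, h₃, ← integral_mul_const]
  simp_rw [mul_assoc]

lemma hasEigenvalue_of_ae_integral_kernel_snd {k : Y → Y → ℂ} {K : Lp ℂ 2 ν →L[ℂ] Lp ℂ 2 ν}
    (hK : ∀ g : Lp ℂ 2 ν, K g =ᵐ[ν] fun y => ∫ t, k y t * g t ∂ν)
    {f : X × Y → ℂ} (hf : MemLp f 2 (μ.prod ν)) (hf0 : ¬ f =ᵐ[μ.prod ν] 0) {z : ℂ}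
    (h : (fun p => ∫ t, k p.2 t * f (p.1, t) ∂ν) =ᵐ[μ.prod ν] z • f) :
    Module.End.HasEigenvalue (K : Lp ℂ 2 ν →ₗ[ℂ] Lp ℂ 2 ν) z := by
  have hslice : ∃ᶠ x in ae μ, ¬ (fun y => f (x, y)) =ᵐ[ν] 0 := fun h0 =>
    hf0 (hf.1.ae_eq_zero_of_ae_ae_eq_zero (h0.mono fun _ hx => not_not.1 hx))
  obtain ⟨x, hx0, hxmem, hxeq⟩ := (hslice.and_eventually
    ((hf.prod_right_ae two_ne_zero ENNReal.ofNat_ne_top).and (Measure.ae_ae_of_ae_prod h))).exists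
  set g := hxmem.toLp _
  have hKg : K g = z • g := by
    refine Lp.ext ?_
    filter_upwards [hK g, hxeq, Lp.coeFn_smul z g, hxmem.coeFn_toLp] with y h₁ h₂ h₃ h₄
    rw [h₁, h₃, Pi.smul_apply, h₄, ← Pi.smul_apply z f, ← h₂]
    exact integral_congr_ae (hxmem.coeFn_toLp.mono fun t ht => congrArg (k y t * ·) ht)
  have hg0 : g ≠ 0 := fun hg =>
    hx0 (hxmem.coeFn_toLp.symm.trans (Lp.eq_zero_iff_ae_eq_zero.1 hg))
  exact Module.End.hasEigenvalue_of_hasEigenvector ⟨Module.End.mem_eigenspace_iff.2 hKg, hg0⟩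

lemma hasEigenvalue_of_ae_integral_kernel_fst {k : X → X → ℂ} {K : Lp ℂ 2 μ →L[ℂ] Lp ℂ 2 μ}
    (hK : ∀ φ : Lp ℂ 2 μ, K φ =ᵐ[μ] fun x => ∫ s, k x s * φ s ∂μ)
    {f : X × Y → ℂ} (hf : MemLp f 2 (μ.prod ν)) (hf0 : ¬ f =ᵐ[μ.prod ν] 0) {z : ℂ}
    (h : (fun p => ∫ s, k p.1 s * f (s, p.2) ∂μ) =ᵐ[μ.prod ν] z • f) :
    Module.End.HasEigenvalue (K : Lp ℂ 2 μ →ₗ[ℂ] Lp ℂ 2 μ) z := by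
  have hswap := Measure.measurePreserving_swap (μ := ν) (ν := μ)
  refine hasEigenvalue_of_ae_integral_kernel_snd hK (hf.comp_measurePreserving hswap)
    (fun h0 => hf0 ?_) (hswap.quasiMeasurePreserving.ae_eq h)
  have := (Measure.measurePreserving_swap (μ := μ) (ν := ν)).quasiMeasurePreserving.ae_eq h0
  simp only [Function.comp_def, Prod.swap_swap] at this
  exact this

lemma integral_mul_integral_mul_comm {a : X → ℂ} {b : Y → ℂ} {Ca Cb : ℝ}
    (ha : AEStronglyMeasurable a μ) (hb : AEStronglyMeasurable b ν) (hCa : ∀ s, ‖a s‖ ≤ Ca)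
    (hCb : ∀ t, ‖b t‖ ≤ Cb) {f : X × Y → ℂ} (hf : Integrable f (μ.prod ν)) :
    ∫ s, a s * ∫ t, b t * f (s, t) ∂ν ∂μ = ∫ t, b t * ∫ s, a s * f (s, t) ∂μ ∂ν := by
  have hint : Integrable (fun p : X × Y => a p.1 * (b p.2 * f p)) (μ.prod ν) :=
    (hf.bdd_mul hb.comp_snd (.of_forall fun p => hCb p.2)).bdd_mul ha.comp_fst
      (.of_forall fun p => hCa p.1)
  simp_rw [← integral_const_mul]
  rw [integral_integral_swap hint]
  simp_rw [mul_left_comm]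

lemma commute_of_integral_kernels [IsFiniteMeasure μ] [IsFiniteMeasure ν] {k₁ : X → X → ℂ}
    {k₂ : Y → Y → ℂ} {C₁ C₂ : ℝ} (hk₁ : ∀ x s, ‖k₁ x s‖ ≤ C₁) (hk₂ : ∀ y t, ‖k₂ y t‖ ≤ C₂)
    (hm₁ : ∀ x, AEStronglyMeasurable (k₁ x) μ) (hm₂ : ∀ y, AEStronglyMeasurable (k₂ y) ν)
    {T₁ T₂ : Lp ℂ 2 (μ.prod ν) →L[ℂ] Lp ℂ 2 (μ.prod ν)}
    (hT₁ : ∀ f : Lp ℂ 2 (μ.prod ν), T₁ f =ᵐ[μ.prod ν] fun p => ∫ s, k₁ p.1 s * f (s, p.2) ∂μ)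
    (hT₂ : ∀ f : Lp ℂ 2 (μ.prod ν), T₂ f =ᵐ[μ.prod ν] fun p => ∫ t, k₂ p.2 t * f (p.1, t) ∂ν) :
    Commute (T₁ : Lp ℂ 2 (μ.prod ν) →ₗ[ℂ] Lp ℂ 2 (μ.prod ν)) T₂ := by
  refine LinearMap.ext fun f => Lp.ext ?_
  filter_upwards [hT₁ (T₂ f), ae_integral_kernel_fst_congr (hT₂ f) k₁, hT₂ (T₁ f),
    ae_integral_kernel_snd_congr (hT₁ f) k₂] with p h₁ h₂ h₃ h₄
  simp only [Module.End.mul_apply, coe_coe]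
  rw [h₁, h₂, h₃, h₄]
  exact integral_mul_integral_mul_comm (hm₁ p.1) (hm₂ p.2) (hk₁ p.1) (hk₂ p.2)
    ((Lp.memLp f).integrable one_le_two)

end IntegralOperators

section Setting

variable {d₁ d₂ : ℕ}
  {Ω₁ : Set (EuclideanSpace ℝ (Fin d₁))} {Ω₂ : Set (EuclideanSpace ℝ (Fin d₂))}

theorem card_discreteSpectrum_T_general
    (ν₁ : Measure Ω₁) (ν₂ : Measure Ω₂) [IsFiniteMeasure ν₁] [IsFiniteMeasure ν₂]
    (k₁ : Ω₁ → Ω₁ → ℂ) (k₂ : Ω₂ → Ω₂ → ℂ)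
    (K₁ : Lp ℂ 2 ν₁ →L[ℂ] Lp ℂ 2 ν₁) (K₂ : Lp ℂ 2 ν₂ →L[ℂ] Lp ℂ 2 ν₂)
    (T₁ T₂ : Lp ℂ 2 (ν₁.prod ν₂) →L[ℂ] Lp ℂ 2 (ν₁.prod ν₂))
    (hΩ₁ : IsCompact Ω₁) (hΩ₂ : IsCompact Ω₂)
    (hk₁c : Continuous fun p : Ω₁ × Ω₁ => k₁ p.1 p.2)
    (hk₂c : Continuous fun p : Ω₂ × Ω₂ => k₂ p.1 p.2)
    (hK₁ : ∀ φ : Lp ℂ 2 ν₁, (K₁ φ : Ω₁ → ℂ) =ᵐ[ν₁] fun x => ∫ s, k₁ x s * φ s ∂ν₁)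
    (hK₂ : ∀ φ : Lp ℂ 2 ν₂, (K₂ φ : Ω₂ → ℂ) =ᵐ[ν₂] fun y => ∫ t, k₂ y t * φ t ∂ν₂)
    (hK₁sa : IsSelfAdjoint K₁) (hK₂sa : IsSelfAdjoint K₂)
    (hT₁ : ∀ f : Lp ℂ 2 (ν₁.prod ν₂),
      (T₁ f : Ω₁ × Ω₂ → ℂ) =ᵐ[ν₁.prod ν₂] fun p => ∫ s, k₁ p.1 s * f (s, p.2) ∂ν₁)
    (hT₂ : ∀ f : Lp ℂ 2 (ν₁.prod ν₂),
      (T₂ f : Ω₁ × Ω₂ → ℂ) =ᵐ[ν₁.prod ν₂] fun p => ∫ t, k₂ p.2 t * f (p.1, t) ∂ν₂) :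
    Cardinal.mk (discreteSpectrum (T₁ + T₂)) ≤
      Cardinal.mk (discreteSpectrum K₁) * Cardinal.mk (discreteSpectrum K₂) := by
  have : CompactSpace Ω₁ := isCompact_iff_compactSpace.1 hΩ₁
  have : CompactSpace Ω₂ := isCompact_iff_compactSpace.1 hΩ₂
  obtain ⟨C₁, hC₁⟩ := isCompact_univ.exists_bound_of_continuousOn hk₁c.continuousOn
  obtain ⟨C₂, hC₂⟩ := isCompact_univ.exists_bound_of_continuousOn hk₂c.continuousOn
  have hcomm := commute_of_integral_kernels (fun x s => hC₁ (x, s) trivial)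
    (fun y t => hC₂ (y, t) trivial) (fun x => (hk₁c.comp (.prodMk_right x)).aestronglyMeasurable)
    (fun y => (hk₂c.comp (.prodMk_right y)).aestronglyMeasurable) hT₁ hT₂
  have hT (φ : Lp ℂ 2 ν₁) (g : Lp ℂ 2 ν₂) : (T₁ + T₂) (tensLp ν₁ ν₂ φ g) =
      tensLp ν₁ ν₂ (K₁ φ) g + tensLp ν₁ ν₂ φ (K₂ g) := by
    rw [add_apply, apply_tensLp_of_integral_kernel_fst hK₁ hT₁,
      apply_tensLp_of_integral_kernel_snd hK₂ hT₂]
  have hsub : discreteSpectrum (T₁ + T₂) ⊆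
      Set.image2 (· + ·) (discreteSpectrum K₁) (discreteSpectrum K₂) := by
    intro z hz
    have := hz.2.2
    obtain ⟨μ₁, μ₂, v, rfl, hv₁, hv₂⟩ := Module.End.exists_hasEigenvector_of_commute hcomm hz.2.1
    have hv0 : ¬ (v : Ω₁ × Ω₂ → ℂ) =ᵐ[ν₁.prod ν₂] 0 := Lp.eq_zero_iff_ae_eq_zero.not.1 hv₁.2
    have he₁ := hasEigenvalue_of_ae_integral_kernel_fst hK₁ (Lp.memLp v) hv0
      ((hT₁ v).symm.trans (hv₁.apply_eq_smul ▸ Lp.coeFn_smul μ₁ v))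
    have he₂ := hasEigenvalue_of_ae_integral_kernel_snd hK₂ (Lp.memLp v) hv0
      ((hT₂ v).symm.trans (hv₂.apply_eq_smul ▸ Lp.coeFn_smul μ₂ v))
    exact Set.mem_image2_of_mem
      (mem_discreteSpectrum_of_tensor_left norm_tensLp hT hK₁sa he₁ he₂ hz)
      (mem_discreteSpectrum_of_tensor_right norm_tensLp hT hK₂sa he₁ he₂ hz)
  exact (Cardinal.mk_le_mk_of_subset hsub).trans Cardinal.mk_image2_le

/-- **Proposition 3.1 (в).** `|σ_d(T)| ≤ |σ_d(K₁)| ⬝ |σ_d(K₂)|`. -/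
theorem card_discreteSpectrum_T
    (ν₁ : Measure Ω₁) (ν₂ : Measure Ω₂) [IsFiniteMeasure ν₁] [IsFiniteMeasure ν₂]
    (k₁ : Ω₁ → Ω₁ → ℂ) (k₂ : Ω₂ → Ω₂ → ℂ)
    (K₁ : Lp ℂ 2 ν₁ →L[ℂ] Lp ℂ 2 ν₁) (K₂ : Lp ℂ 2 ν₂ →L[ℂ] Lp ℂ 2 ν₂)
    (T₁ T₂ : Lp ℂ 2 (ν₁.prod ν₂) →L[ℂ] Lp ℂ 2 (ν₁.prod ν₂))
    (hΩ₁ : IsCompact Ω₁) (hΩ₂ : IsCompact Ω₂)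
    (hk₁c : Continuous fun p : Ω₁ × Ω₁ => k₁ p.1 p.2)
    (hk₂c : Continuous fun p : Ω₂ × Ω₂ => k₂ p.1 p.2)
    (hk₁h : ∀ x s, k₁ x s = starRingEnd ℂ (k₁ s x))
    (hk₂h : ∀ y t, k₂ y t = starRingEnd ℂ (k₂ t y))
    (hK₁ : ∀ φ : Lp ℂ 2 ν₁, (K₁ φ : Ω₁ → ℂ) =ᵐ[ν₁] fun x => ∫ s, k₁ x s * φ s ∂ν₁)
    (hK₂ : ∀ φ : Lp ℂ 2 ν₂, (K₂ φ : Ω₂ → ℂ) =ᵐ[ν₂] fun y => ∫ t, k₂ y t * φ t ∂ν₂)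
    (hK₁sa : IsSelfAdjoint K₁) (hK₂sa : IsSelfAdjoint K₂)
    (hK₁cpt : IsCompactOperator K₁) (hK₂cpt : IsCompactOperator K₂)
    (hT₁ : ∀ f : Lp ℂ 2 (ν₁.prod ν₂),
      (T₁ f : Ω₁ × Ω₂ → ℂ) =ᵐ[ν₁.prod ν₂] fun p => ∫ s, k₁ p.1 s * f (s, p.2) ∂ν₁)
    (hT₂ : ∀ f : Lp ℂ 2 (ν₁.prod ν₂),
      (T₂ f : Ω₁ × Ω₂ → ℂ) =ᵐ[ν₁.prod ν₂] fun p => ∫ t, k₂ p.2 t * f (p.1, t) ∂ν₂)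
    (hinf₁ : ¬ FiniteDimensional ℂ (Lp ℂ 2 ν₁))
    (hinf₂ : ¬ FiniteDimensional ℂ (Lp ℂ 2 ν₂)) :
    Cardinal.mk (discreteSpectrum (T₁ + T₂)) ≤
      Cardinal.mk (discreteSpectrum K₁) * Cardinal.mk (discreteSpectrum K₂) :=
  card_discreteSpectrum_T_general ν₁ ν₂ k₁ k₂ K₁ K₂ T₁ T₂ hΩ₁ hΩ₂ hk₁c hk₂c hK₁ hK₂ hK₁sa hK₂sa hT₁
    hT₂

end Setting

end
end

section
/- Assume L²(Ω₁,ν₁) and L²(Ω₂,ν₂) are infinite-dimensional, k₀ ≥ 0 on Ω₁×Ω₂ with k₀(x₀,y₀) = 0 for some point (x₀,y₀), and K₁ ≥ 0, K₂ ≥ 0 as operators. Let η₀ = sup σ_e(T). If H₀ ≥ (E_min(H) + η₀)·I (as bounded self-adjoint operators on L²(Ω₁×Ω₂)) and the discrete spectrum σ_d(T) of T is finite, then the set of eigenvalues of H lying strictly below E_min(H) is finite, and their total multiplicity is finite. -/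
/-!
`T = T₁ + T₂` is self-adjoint because its kernels are Hermitian, and its spectrum above
`η₀ = sup σ_e(T)` consists of finitely many isolated eigenvalues of finite multiplicity. The
spectral projection `P` of `T` onto them therefore has finite rank, and `⟪f, T f⟫ ≤ η₀ ‖f‖²`
whenever `P f = 0`. On the other hand `⟪f, H f⟫ < E_min(H) ‖f‖²` for every nonzero `f` in the span
of the eigenvectors of `H` with eigenvalue below `E_min(H)`. Since `H₀ = H + T ≥ E_min(H) + η₀`,
no such `f` lies in `ker P`, so this span embeds into the range of `P`; in particular it is
finite-dimensional, and as eigenvectors for distinct eigenvalues are linearly independent, there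
are only finitely many such eigenvalues.
-/

open MeasureTheory Filter Topology Metric

noncomputable section

variable {𝓗 : Type*} [NormedAddCommGroup 𝓗] [InnerProductSpace ℂ 𝓗]

open ComplexConjugate

section KernelOperator

variable {X Y : Type*} [MeasurableSpace X] [MeasurableSpace Y] {μ : Measure X} {ρ : Measure Y}
  [SFinite μ] [IsFiniteMeasure ρ]

theorem isSelfAdjoint_of_ae_eq_integral_kernel {κ : X × Y → ℂ}
    (hκm : AEStronglyMeasurable κ (μ.prod ρ)) {C : ℝ} (hκC : ∀ q, ‖κ q‖ ≤ C)
    {σ : X × Y → X × Y} (hσ : Function.Involutive σ)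
    (hσμ : MeasurePreserving σ (μ.prod ρ) (μ.prod ρ))
    (hκσ : ∀ q, κ (σ q) = conj (κ q)) {T : Lp ℂ 2 μ →L[ℂ] Lp ℂ 2 μ}
    (hT : ∀ f : Lp ℂ 2 μ, (T f : X → ℂ) =ᵐ[μ] fun p => ∫ s, κ (p, s) * f (σ (p, s)).1 ∂ρ) :
    IsSelfAdjoint T := by
  rw [ContinuousLinearMap.isSelfAdjoint_iff_isSymmetric]
  intro f g
  simp only [ContinuousLinearMap.coe_coe]
  let e := MeasurableEquiv.ofInvolutive σ hσ hσμ.measurable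
  set Φ : X × Y → ℂ := fun q => conj (κ q) * (conj (f (σ q).1) * g q.1)
  have hΦ : Integrable Φ (μ.prod ρ) := by
    have hf : MemLp (fun q => conj (f (σ q).1)) 2 (μ.prod ρ) :=
      (((Lp.memLp f).comp_fst ρ).comp_measurePreserving hσμ).star
    exact (hf.integrable_mul ((Lp.memLp g).comp_fst ρ)).bdd_mul hκm.star
      (ae_of_all _ fun q => by simpa using hκC q)
  have hΦσ : Integrable (fun q => Φ (σ q)) (μ.prod ρ) :=
    (hσμ.integrable_comp_emb e.measurableEmbedding).mpr hΦ
  -- By Fubini both inner products are integrals over `X × Y`, of `Φ` and of `Φ ∘ σ`.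
  calc inner ℂ (T f) g = ∫ q, Φ q ∂(μ.prod ρ) := by
        rw [L2.inner_def, integral_prod Φ hΦ]
        refine integral_congr_ae ?_
        filter_upwards [hT f] with p hp
        rw [RCLike.inner_apply, hp, ← integral_conj, ← integral_const_mul]
        simp [Φ, mul_comm, mul_left_comm]
    _ = ∫ q, Φ (σ q) ∂(μ.prod ρ) := (hσμ.integral_comp' (f := e) Φ).symm
    _ = inner ℂ f (T g) := by
        rw [L2.inner_def, integral_prod _ hΦσ]
        refine integral_congr_ae ?_
        filter_upwards [hT g] with p hp
        rw [RCLike.inner_apply, hp, ← integral_mul_const]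
        simp [Φ, hσ _, hκσ, mul_comm, mul_left_comm, mul_assoc]

end KernelOperator

section ProductKernel

variable {α β : Type*} [MeasurableSpace α] [MeasurableSpace β]

theorem isSelfAdjoint_of_ae_eq_integral_kernel_fst [TopologicalSpace α] [OpensMeasurableSpace α]
    [SecondCountableTopology α] [CompactSpace α] {ν₁ : Measure α} {ν₂ : Measure β}
    [IsFiniteMeasure ν₁] [SFinite ν₂] {k : α → α → ℂ}
    (hkc : Continuous fun p : α × α => k p.1 p.2) (hk : ∀ x s, k x s = conj (k s x))
    {T : Lp ℂ 2 (ν₁.prod ν₂) →L[ℂ] Lp ℂ 2 (ν₁.prod ν₂)}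
    (hT : ∀ f : Lp ℂ 2 (ν₁.prod ν₂),
      (T f : α × β → ℂ) =ᵐ[ν₁.prod ν₂] fun p => ∫ s, k p.1 s * f (s, p.2) ∂ν₁) :
    IsSelfAdjoint T := by
  obtain ⟨C, hC⟩ := isCompact_univ.exists_bound_of_continuousOn hkc.continuousOn
  refine isSelfAdjoint_of_ae_eq_integral_kernel (κ := fun q => k q.1.1 q.2)
    (σ := fun q => ((q.2, q.1.2), q.1.1))
    (hkc.stronglyMeasurable.comp_measurable
      (by fun_prop : Measurable fun q : (α × β) × α => (q.1.1, q.2))).aestronglyMeasurable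
    (fun q => hC (q.1.1, q.2) trivial) (fun _ => rfl) ?_ (fun q => hk _ _) hT
  exact (Measure.measurePreserving_swap.comp
      ((MeasurePreserving.id ν₁).prod Measure.measurePreserving_swap)).comp
      (measurePreserving_prodAssoc ν₁ ν₂ ν₁)

theorem isSelfAdjoint_of_ae_eq_integral_kernel_snd [TopologicalSpace β] [OpensMeasurableSpace β]
    [SecondCountableTopology β] [CompactSpace β] {ν₁ : Measure α} {ν₂ : Measure β}
    [SFinite ν₁] [IsFiniteMeasure ν₂] {k : β → β → ℂ}
    (hkc : Continuous fun p : β × β => k p.1 p.2) (hk : ∀ y t, k y t = conj (k t y))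
    {T : Lp ℂ 2 (ν₁.prod ν₂) →L[ℂ] Lp ℂ 2 (ν₁.prod ν₂)}
    (hT : ∀ f : Lp ℂ 2 (ν₁.prod ν₂),
      (T f : α × β → ℂ) =ᵐ[ν₁.prod ν₂] fun p => ∫ t, k p.2 t * f (p.1, t) ∂ν₂) :
    IsSelfAdjoint T := by
  obtain ⟨C, hC⟩ := isCompact_univ.exists_bound_of_continuousOn hkc.continuousOn
  refine isSelfAdjoint_of_ae_eq_integral_kernel (κ := fun q => k q.1.2 q.2)
    (σ := fun q => ((q.1.1, q.2), q.1.2))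
    (hkc.stronglyMeasurable.comp_measurable
      (by fun_prop : Measurable fun q : (α × β) × β => (q.1.2, q.2))).aestronglyMeasurable
    (fun q => hC (q.1.2, q.2) trivial) (fun _ => rfl) ?_ (fun q => hk _ _) hT
  exact ((measurePreserving_prodAssoc ν₁ ν₂ ν₂).symm.comp
      ((MeasurePreserving.id ν₁).prod Measure.measurePreserving_swap)).comp
      (measurePreserving_prodAssoc ν₁ ν₂ ν₂)

end ProductKernel

theorem isSelfAdjoint_of_ae_eq_mul {γ : Type*} [MeasurableSpace γ] {μ : Measure γ} {k₀ : γ → ℝ}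
    {H₀ : Lp ℂ 2 μ →L[ℂ] Lp ℂ 2 μ}
    (hH₀ : ∀ f : Lp ℂ 2 μ, (H₀ f : γ → ℂ) =ᵐ[μ] fun p => (k₀ p : ℂ) * f p) :
    IsSelfAdjoint H₀ := by
  rw [ContinuousLinearMap.isSelfAdjoint_iff_isSymmetric]
  intro f g
  simp only [ContinuousLinearMap.coe_coe, L2.inner_def]
  refine integral_congr_ae ?_
  filter_upwards [hH₀ f, hH₀ g] with p hpf hpg
  simp only [RCLike.inner_apply, hpf, hpg, map_mul, Complex.conj_ofReal]
  ring

theorem ofReal_mem_spectrum {A : 𝓗 →L[ℂ] 𝓗} {t : ℝ} (ht : t ∈ spectrum ℝ A) :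
    (t : ℂ) ∈ spectrum ℂ A :=
  (spectrum.algebraMap_mem_iff ℂ).mpr ht

theorem IsIsolatedIn.eventually_nhdsWithin_spectrum_real {A : 𝓗 →L[ℂ] 𝓗} {μ : ℝ}
    (hμ : IsIsolatedIn (spectrum ℂ A) μ) : ∀ᶠ t in 𝓝[spectrum ℝ A] μ, t = μ := by
  obtain ⟨-, ε, hε, hball⟩ := hμ
  filter_upwards [self_mem_nhdsWithin, mem_nhdsWithin_of_mem_nhds (ball_mem_nhds μ hε)]
    with t ht htμ
  have : (t : ℂ) ∈ spectrum ℂ A ∩ ball (μ : ℂ) ε := by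
    refine ⟨ofReal_mem_spectrum ht, ?_⟩
    rwa [mem_ball, Complex.isometry_ofReal.dist_eq]
  rw [hball] at this
  exact_mod_cast Set.mem_singleton_iff.mp this

theorem continuousOn_indicator_singleton {S : Set ℝ} {μ : ℝ} (hμ : ∀ᶠ t in 𝓝[S] μ, t = μ) :
    ContinuousOn (Set.indicator {μ} (1 : ℝ → ℝ)) S := by
  intro x _
  refine continuousWithinAt_const.congr_of_eventuallyEq ?_ rfl
  by_cases hx : x = μ
  · subst hx
    filter_upwards [hμ] with t ht
    simp [ht]
  · filter_upwards [nhdsWithin_le_nhds (isOpen_ne.mem_nhds hx)] with t ht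
    simp [ht, hx]

theorem finite_setOf_lt_hasEigenvalue {A : 𝓗 →L[ℂ] 𝓗} {E : ℝ}
    [FiniteDimensional ℂ (eigBelow A E)] :
    {t : ℝ | t < E ∧ Module.End.HasEigenvalue (A : 𝓗 →ₗ[ℂ] 𝓗) (t : ℂ)}.Finite := by
  rw [← Set.finite_coe_iff]
  choose v hv using fun t : {t : ℝ | t < E ∧ Module.End.HasEigenvalue (A : 𝓗 →ₗ[ℂ] 𝓗) (t : ℂ)} =>
    t.2.2.exists_hasEigenvector
  have hmem : ∀ t, v t ∈ eigBelow A E := fun t => Submodule.mem_iSup_of_mem ⟨t, t.2.1⟩ (hv t).1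
  have hli := Module.End.eigenvectors_linearIndependent' _ _
    (Complex.ofReal_injective.comp Subtype.val_injective) v hv
  have hli' : LinearIndependent ℂ fun t => (⟨v t, hmem t⟩ : eigBelow A E) :=
    .of_comp (eigBelow A E).subtype hli
  exact hli'.finite

section SelfAdjoint

variable [CompleteSpace 𝓗]

theorem cfc_indicator_singleton_apply_mem_eigenspace {A : 𝓗 →L[ℂ] 𝓗} (hA : IsSelfAdjoint A)
    {μ : ℝ} (hχ : ContinuousOn (Set.indicator {μ} (1 : ℝ → ℝ)) (spectrum ℝ A)) (f : 𝓗) :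
    cfc (Set.indicator {μ} 1) A f ∈ Module.End.eigenspace (A : 𝓗 →ₗ[ℂ] 𝓗) (μ : ℂ) := by
  have hid : (fun t => t * Set.indicator {μ} 1 t) =
      fun t => μ * Set.indicator {μ} (1 : ℝ → ℝ) t := by
    ext t
    by_cases ht : t = μ <;> simp [ht]
  have hcomm : A * cfc (Set.indicator {μ} 1) A = μ • cfc (Set.indicator {μ} 1) A := by
    rw [← cfc_const_mul μ _ A hχ, ← hid, cfc_mul (fun t => t) _ A continuousOn_id hχ, cfc_id' ℝ A]
  rw [Module.End.mem_eigenspace_iff]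
  simpa [Complex.coe_smul] using congr($hcomm f)

theorem re_inner_apply_self_le_of_cfc_apply_eq_zero {A : 𝓗 →L[ℂ] 𝓗} (hA : IsSelfAdjoint A)
    {χ : ℝ → ℝ} {η : ℝ} (hχ : ContinuousOn χ (spectrum ℝ A))
    (hχη : ∀ t ∈ spectrum ℝ A, t - (t - η) * χ t ≤ η) {f : 𝓗} (hf : cfc χ A f = 0) :
    (inner ℂ f (A f)).re ≤ η * ‖f‖ ^ 2 := by
  -- `cfc (fun t => t - (t - η) * χ t) A` agrees with `A` on `ker (cfc χ A)` and is `≤ η`.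
  have hsplit : cfc (fun t => t - (t - η) * χ t) A = A - (A - algebraMap ℝ _ η) * cfc χ A := by
    rw [cfc_sub _ _ A, cfc_mul (fun t => t - η) _ A (by fun_prop) hχ, cfc_sub _ _ A,
      cfc_id' ℝ A, cfc_const η A]
  have hle : cfc (fun t => t - (t - η) * χ t) A ≤ algebraMap ℝ _ η := cfc_le_algebraMap _ η A hχη
  have hrf : cfc (fun t => t - (t - η) * χ t) A f = A f := by
    simp [hsplit, hf]
  have hpos := ((ContinuousLinearMap.le_def _ _).mp hle).re_inner_nonneg_right f
  rw [sub_apply, hrf, ContinuousLinearMap.algebraMap_apply, inner_sub_right,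
    map_sub, inner_smul_right_eq_smul, RCLike.smul_re, inner_self_eq_norm_sq,
    RCLike.re_to_complex] at hpos
  linarith

theorem exists_finiteDimensional_range_re_inner_le {A : 𝓗 →L[ℂ] 𝓗} (hA : IsSelfAdjoint A)
    (η : ℝ) (F : Finset ℝ) (hiso : ∀ μ ∈ F, ∀ᶠ t in 𝓝[spectrum ℝ A] μ, t = μ)
    (hfin : ∀ μ ∈ F, FiniteDimensional ℂ (Module.End.eigenspace (A : 𝓗 →ₗ[ℂ] 𝓗) (μ : ℂ)))
    (hle : ∀ t ∈ spectrum ℝ A, t ∉ F → t ≤ η) :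
    ∃ P : 𝓗 →L[ℂ] 𝓗, FiniteDimensional ℂ (LinearMap.range (P : 𝓗 →ₗ[ℂ] 𝓗)) ∧
      ∀ f, P f = 0 → (inner ℂ f (A f)).re ≤ η * ‖f‖ ^ 2 := by
  have hχ : ∀ μ ∈ F, ContinuousOn (Set.indicator {μ} (1 : ℝ → ℝ)) (spectrum ℝ A) :=
    fun μ hμ => continuousOn_indicator_singleton (hiso μ hμ)
  -- the spectral projection of `A` onto the eigenvalues in `F`
  refine ⟨cfc (∑ μ ∈ F, Set.indicator {μ} 1) A, ?_, fun f hf => ?_⟩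
  · have : ∀ i : F, FiniteDimensional ℂ (Module.End.eigenspace (A : 𝓗 →ₗ[ℂ] 𝓗) (i : ℂ)) :=
      fun i => hfin i i.2
    refine Submodule.finiteDimensional_of_le
      (S₂ := ⨆ i : F, Module.End.eigenspace (A : 𝓗 →ₗ[ℂ] 𝓗) (i : ℂ)) ?_
    rintro _ ⟨f, rfl⟩
    rw [ContinuousLinearMap.coe_coe, cfc_sum _ _ _ hχ, ← Finset.sum_attach, sum_apply]
    exact Submodule.sum_mem _ fun i _ => Submodule.mem_iSup_of_mem i
      (cfc_indicator_singleton_apply_mem_eigenspace hA (hχ i i.2) f)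
  · rw [Finset.sum_fn] at hf
    refine re_inner_apply_self_le_of_cfc_apply_eq_zero hA (continuousOn_finsetSum F hχ)
      (fun t ht => ?_) hf
    by_cases htF : t ∈ F
    · simp [htF]
    · simpa [htF] using hle t ht htF

theorem bddAbove_essSpectrum_real (A : 𝓗 →L[ℂ] 𝓗) :
    BddAbove {x : ℝ | (x : ℂ) ∈ essSpectrum A} :=
  ⟨‖A‖ * ‖(1 : 𝓗 →L[ℂ] 𝓗)‖, fun x hx => (le_abs_self x).trans <| by
    simpa using spectrum.norm_le_norm_mul_of_mem hx.1⟩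

theorem exists_finiteDimensional_range_re_inner_le_sSup_essSpectrum {A : 𝓗 →L[ℂ] 𝓗}
    (hA : IsSelfAdjoint A) (hfin : (discreteSpectrum A).Finite) :
    ∃ P : 𝓗 →L[ℂ] 𝓗, FiniteDimensional ℂ (LinearMap.range (P : 𝓗 →ₗ[ℂ] 𝓗)) ∧
      ∀ f, P f = 0 → (inner ℂ f (A f)).re ≤ sSup {x : ℝ | (x : ℂ) ∈ essSpectrum A} * ‖f‖ ^ 2 := by
  have hF : {t : ℝ | (t : ℂ) ∈ discreteSpectrum A}.Finite :=
    hfin.preimage Complex.ofReal_injective.injOn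
  refine exists_finiteDimensional_range_re_inner_le hA _ hF.toFinset
    (fun μ hμ => (hF.mem_toFinset.mp hμ).1.eventually_nhdsWithin_spectrum_real)
    (fun μ hμ => (hF.mem_toFinset.mp hμ).2.2) fun t ht htF => ?_
  exact le_csSup (bddAbove_essSpectrum_real A)
    ⟨ofReal_mem_spectrum ht, fun h => htF (hF.mem_toFinset.mpr h)⟩

theorem re_inner_apply_self_lt_of_mem_eigBelow {A : 𝓗 →L[ℂ] 𝓗} (hA : IsSelfAdjoint A) {E : ℝ}
    {f : 𝓗} (hf : f ∈ eigBelow A E) (hf0 : f ≠ 0) : (inner ℂ f (A f)).re < E * ‖f‖ ^ 2 := by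
  obtain ⟨c, hc, rfl⟩ := (Submodule.mem_iSup_iff_exists_finsupp _ f).mp hf
  have hV :=
    (ContinuousLinearMap.isSelfAdjoint_iff_isSymmetric.mp hA).orthogonalFamily_eigenspaces.comp
      (Complex.ofReal_injective.comp Subtype.val_injective : Function.Injective
        fun i : {t : ℝ // t < E} => ((i : ℝ) : ℂ))
  let l : ∀ i : {t : ℝ // t < E}, Module.End.eigenspace (A : 𝓗 →ₗ[ℂ] 𝓗) ((i : ℝ) : ℂ) :=
    fun i => ⟨c i, hc i⟩
  have hAl : ∀ i, A (c i) = ((i : ℝ) : ℂ) • c i := fun i => Module.End.mem_eigenspace_iff.mp (hc i)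
  have hinner := hV.inner_sum l (fun i => ((i : ℝ) : ℂ) • l i) c.support
  have hnorm := hV.norm_sum l c.support
  simp only [Submodule.coe_subtypeₗᵢ, Submodule.coe_subtype, SetLike.val_smul,
    Submodule.coe_norm, Submodule.coe_inner, l] at hinner hnorm
  have hne : c.support.Nonempty := by
    rw [Finset.nonempty_iff_ne_empty]
    rintro h
    simp [Finsupp.sum, h] at hf0
  simp only [Finsupp.sum, map_sum, hAl, hinner, hnorm, Complex.re_sum, Finset.mul_sum]
  refine Finset.sum_lt_sum_of_nonempty hne fun i hi => ?_
  rw [inner_smul_right, Complex.re_ofReal_mul, ← RCLike.re_to_complex, inner_self_eq_norm_sq]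
  have hci : 0 < ‖c i‖ := norm_pos_iff.mpr (Finsupp.mem_support_iff.mp hi)
  exact mul_lt_mul_of_pos_right i.2 (pow_pos hci 2)

theorem finiteDimensional_eigBelow_sub {H₀ T P : 𝓗 →L[ℂ] 𝓗} (hH : IsSelfAdjoint (H₀ - T))
    {E η : ℝ} (hH₀ : ∀ f, (E + η) * ‖f‖ ^ 2 ≤ (inner ℂ f (H₀ f)).re)
    [FiniteDimensional ℂ (LinearMap.range (P : 𝓗 →ₗ[ℂ] 𝓗))]
    (hT : ∀ f, P f = 0 → (inner ℂ f (T f)).re ≤ η * ‖f‖ ^ 2) :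
    FiniteDimensional ℂ (eigBelow (H₀ - T) E) := by
  refine FiniteDimensional.of_injective
    ((P : 𝓗 →ₗ[ℂ] 𝓗).rangeRestrict.comp (eigBelow (H₀ - T) E).subtype) ?_
  refine (injective_iff_map_eq_zero _).mpr fun v hv => ?_
  by_contra hv0
  have hPv : P v = 0 := congr_arg Subtype.val hv
  have hlt := re_inner_apply_self_lt_of_mem_eigBelow hH v.2 (by simpa using hv0)
  have hsplit : (inner ℂ (v : 𝓗) (H₀ v)).re =
      (inner ℂ (v : 𝓗) ((H₀ - T) v)).re + (inner ℂ (v : 𝓗) (T v)).re := by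
    simp
  linarith [hH₀ v, hT v hPv]

end SelfAdjoint

section Setting

variable {d₁ d₂ : ℕ}
  {Ω₁ : Set (EuclideanSpace ℝ (Fin d₁))} {Ω₂ : Set (EuclideanSpace ℝ (Fin d₂))}

theorem finitely_many_eigenvalues_below_general
    (ν₁ : Measure Ω₁) (ν₂ : Measure Ω₂) [IsFiniteMeasure ν₁] [IsFiniteMeasure ν₂]
    (k₁ : Ω₁ → Ω₁ → ℂ) (k₂ : Ω₂ → Ω₂ → ℂ)
    (T₁ T₂ : Lp ℂ 2 (ν₁.prod ν₂) →L[ℂ] Lp ℂ 2 (ν₁.prod ν₂))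
    (hΩ₁ : IsCompact Ω₁) (hΩ₂ : IsCompact Ω₂)
    (hk₁c : Continuous fun p : Ω₁ × Ω₁ => k₁ p.1 p.2)
    (hk₂c : Continuous fun p : Ω₂ × Ω₂ => k₂ p.1 p.2)
    (hk₁h : ∀ x s, k₁ x s = starRingEnd ℂ (k₁ s x))
    (hk₂h : ∀ y t, k₂ y t = starRingEnd ℂ (k₂ t y))
    (hT₁ : ∀ f : Lp ℂ 2 (ν₁.prod ν₂),
      (T₁ f : Ω₁ × Ω₂ → ℂ) =ᵐ[ν₁.prod ν₂] fun p => ∫ s, k₁ p.1 s * f (s, p.2) ∂ν₁)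
    (hT₂ : ∀ f : Lp ℂ 2 (ν₁.prod ν₂),
      (T₂ f : Ω₁ × Ω₂ → ℂ) =ᵐ[ν₁.prod ν₂] fun p => ∫ t, k₂ p.2 t * f (p.1, t) ∂ν₂)
    (k₀ : Ω₁ × Ω₂ → ℝ)
    (H₀ : Lp ℂ 2 (ν₁.prod ν₂) →L[ℂ] Lp ℂ 2 (ν₁.prod ν₂))
    (hH₀ : ∀ f : Lp ℂ 2 (ν₁.prod ν₂),
      (H₀ f : Ω₁ × Ω₂ → ℂ) =ᵐ[ν₁.prod ν₂] fun p => (k₀ p : ℂ) * f p)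
    (hH₀ge : ∀ f : Lp ℂ 2 (ν₁.prod ν₂),
      (Emin (H₀ - (T₁ + T₂)) + sSup {x : ℝ | (x : ℂ) ∈ essSpectrum (T₁ + T₂)}) * ‖f‖ ^ 2 ≤
        (inner ℂ f (H₀ f) : ℂ).re)
    (hTdfin : (discreteSpectrum (T₁ + T₂)).Finite) :
    {lam : ℝ | lam < Emin (H₀ - (T₁ + T₂)) ∧
        Module.End.HasEigenvalue ((H₀ - (T₁ + T₂) : Lp ℂ 2 (ν₁.prod ν₂) →L[ℂ]
          Lp ℂ 2 (ν₁.prod ν₂)) : Lp ℂ 2 (ν₁.prod ν₂) →ₗ[ℂ] Lp ℂ 2 (ν₁.prod ν₂))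
          ((lam : ℝ) : ℂ)}.Finite ∧
    FiniteDimensional ℂ (eigBelow (H₀ - (T₁ + T₂)) (Emin (H₀ - (T₁ + T₂)))) := by
  have := isCompact_iff_compactSpace.mp hΩ₁
  have := isCompact_iff_compactSpace.mp hΩ₂
  have hT : IsSelfAdjoint (T₁ + T₂) :=
    (isSelfAdjoint_of_ae_eq_integral_kernel_fst hk₁c hk₁h hT₁).add
      (isSelfAdjoint_of_ae_eq_integral_kernel_snd hk₂c hk₂h hT₂)
  have hH : IsSelfAdjoint (H₀ - (T₁ + T₂)) := (isSelfAdjoint_of_ae_eq_mul hH₀).sub hT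
  obtain ⟨P, hP, hPT⟩ := exists_finiteDimensional_range_re_inner_le_sSup_essSpectrum hT hTdfin
  have hV := finiteDimensional_eigBelow_sub hH hH₀ge hPT
  exact ⟨finite_setOf_lt_hasEigenvalue, hV⟩

/-- **Theorem 4.1.** Suppose `k₀ ≥ 0` vanishes somewhere, `K₁ ≥ 0`, `K₂ ≥ 0`, and
`H₀ ≥ (E_min(H) + η₀)·I` where `η₀ = sup σ_e(T)`, `T = T₁ + T₂`, `H = H₀ - T`.
If `σ_d(T)` is finite, then the set of eigenvalues of `H` lying strictly below `E_min(H)`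
is finite and their total multiplicity is finite. -/
theorem finitely_many_eigenvalues_below
    (ν₁ : Measure Ω₁) (ν₂ : Measure Ω₂) [IsFiniteMeasure ν₁] [IsFiniteMeasure ν₂]
    (k₁ : Ω₁ → Ω₁ → ℂ) (k₂ : Ω₂ → Ω₂ → ℂ)
    (K₁ : Lp ℂ 2 ν₁ →L[ℂ] Lp ℂ 2 ν₁) (K₂ : Lp ℂ 2 ν₂ →L[ℂ] Lp ℂ 2 ν₂)
    (T₁ T₂ : Lp ℂ 2 (ν₁.prod ν₂) →L[ℂ] Lp ℂ 2 (ν₁.prod ν₂))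
    (hΩ₁ : IsCompact Ω₁) (hΩ₂ : IsCompact Ω₂)
    (hk₁c : Continuous fun p : Ω₁ × Ω₁ => k₁ p.1 p.2)
    (hk₂c : Continuous fun p : Ω₂ × Ω₂ => k₂ p.1 p.2)
    (hk₁h : ∀ x s, k₁ x s = starRingEnd ℂ (k₁ s x))
    (hk₂h : ∀ y t, k₂ y t = starRingEnd ℂ (k₂ t y))
    (hK₁ : ∀ φ : Lp ℂ 2 ν₁, (K₁ φ : Ω₁ → ℂ) =ᵐ[ν₁] fun x => ∫ s, k₁ x s * φ s ∂ν₁)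
    (hK₂ : ∀ φ : Lp ℂ 2 ν₂, (K₂ φ : Ω₂ → ℂ) =ᵐ[ν₂] fun y => ∫ t, k₂ y t * φ t ∂ν₂)
    (hK₁sa : IsSelfAdjoint K₁) (hK₂sa : IsSelfAdjoint K₂)
    (hK₁cpt : IsCompactOperator K₁) (hK₂cpt : IsCompactOperator K₂)
    (hT₁ : ∀ f : Lp ℂ 2 (ν₁.prod ν₂),
      (T₁ f : Ω₁ × Ω₂ → ℂ) =ᵐ[ν₁.prod ν₂] fun p => ∫ s, k₁ p.1 s * f (s, p.2) ∂ν₁)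
    (hT₂ : ∀ f : Lp ℂ 2 (ν₁.prod ν₂),
      (T₂ f : Ω₁ × Ω₂ → ℂ) =ᵐ[ν₁.prod ν₂] fun p => ∫ t, k₂ p.2 t * f (p.1, t) ∂ν₂)
    (hinf₁ : ¬ FiniteDimensional ℂ (Lp ℂ 2 ν₁))
    (hinf₂ : ¬ FiniteDimensional ℂ (Lp ℂ 2 ν₂))
    (k₀ : Ω₁ × Ω₂ → ℝ)
    (hk₀c : Continuous k₀) (hk₀nn : ∀ p, 0 ≤ k₀ p) (hk₀z : ∃ p, k₀ p = 0)
    (H₀ : Lp ℂ 2 (ν₁.prod ν₂) →L[ℂ] Lp ℂ 2 (ν₁.prod ν₂))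
    (hH₀ : ∀ f : Lp ℂ 2 (ν₁.prod ν₂),
      (H₀ f : Ω₁ × Ω₂ → ℂ) =ᵐ[ν₁.prod ν₂] fun p => (k₀ p : ℂ) * f p)
    (hK₁pos : K₁.IsPositive) (hK₂pos : K₂.IsPositive)
    (hH₀ge : ∀ f : Lp ℂ 2 (ν₁.prod ν₂),
      (Emin (H₀ - (T₁ + T₂)) + sSup {x : ℝ | (x : ℂ) ∈ essSpectrum (T₁ + T₂)}) * ‖f‖ ^ 2 ≤
        (inner ℂ f (H₀ f) : ℂ).re)
    (hTdfin : (discreteSpectrum (T₁ + T₂)).Finite) :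
    {lam : ℝ | lam < Emin (H₀ - (T₁ + T₂)) ∧
        Module.End.HasEigenvalue ((H₀ - (T₁ + T₂) : Lp ℂ 2 (ν₁.prod ν₂) →L[ℂ]
          Lp ℂ 2 (ν₁.prod ν₂)) : Lp ℂ 2 (ν₁.prod ν₂) →ₗ[ℂ] Lp ℂ 2 (ν₁.prod ν₂))
          ((lam : ℝ) : ℂ)}.Finite ∧
    FiniteDimensional ℂ (eigBelow (H₀ - (T₁ + T₂)) (Emin (H₀ - (T₁ + T₂)))) :=
  finitely_many_eigenvalues_below_general ν₁ ν₂ k₁ k₂ T₁ T₂ hΩ₁ hΩ₂ hk₁c hk₂c hk₁h hk₂h hT₁ hT₂ k₀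
    H₀ hH₀ hH₀ge hTdfin

end Setting

end
end

section
/- Let W₁ = H₀ − T₁ on L²(Ω₁×Ω₂, ν₁⊗ν₂). For every λ ∈ ℝ, every f ∈ L²(Ω₁×Ω₂) with W₁ f = λ f, and every essentially bounded measurable function ψ : Ω₂ → ℂ, the function g(x,y) = ψ(y) f(x,y) satisfies W₁ g = λ g. Consequently, if the measure ν₂ is nonatomic, then every eigenvalue of W₁ has an infinite-dimensional eigenspace, and hence the discrete spectrum of W₁ is empty: σ_d(W₁) = ∅. -/
/-!
`H₀` multiplies by a function of `(x, y)` and `T₁` integrates in `x` alone, so both commute with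
multiplication by functions `ψ(y)`: if `f` is an eigenfunction, so is `ψ(y) f(x, y)`. When `ν₂`
has no atoms, neither has the marginal on `Ω₂` of `|f| d(ν₁ ⊗ ν₂)`; since `Ω₂` is second
countable and Hausdorff, this marginal can be split again and again into two parts of positive
mass, giving disjoint `Bₙ ⊆ Ω₂` with `1_{Bₙ}(y) f ≠ 0`. These are pairwise orthogonal
eigenfunctions, so every eigenspace is infinite-dimensional and the discrete spectrum is empty.
-/

open MeasureTheory Filter Topology Metric

noncomputable section

variable {𝓗 : Type*} [NormedAddCommGroup 𝓗] [InnerProductSpace ℂ 𝓗]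

section Splitting

variable {α : Type*} [MeasurableSpace α] {μ : Measure α}

lemma MeasureTheory.Measure.exists_subset_measure_ne_zero_and_diff [TopologicalSpace α] [T2Space α]
    [HereditarilyLindelofSpace α] [OpensMeasurableSpace α] [NullSingletonClass μ]
    {s : Set α} (hs : MeasurableSet s) (hμs : μ s ≠ 0) :
    ∃ u ⊆ s, MeasurableSet u ∧ μ u ≠ 0 ∧ μ (s \ u) ≠ 0 := by
  set ρ := μ.restrict s
  have hsupp : ρ.support.Nontrivial := by
    rw [← Set.not_subsingleton_iff]
    intro hsub
    have hρ : ρ (ρ.support ∪ ρ.supportᶜ) = 0 :=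
      measure_union_null (hsub.measure_zero ρ) Measure.measure_compl_support
    simp [ρ, hμs] at hρ
  obtain ⟨x, hx, y, hy, hxy⟩ := hsupp
  obtain ⟨U, V, hU, hV, hxU, hyV, hUV⟩ := t2_separation hxy
  have hρU := (Measure.mem_support_iff_forall x).1 hx U (hU.mem_nhds hxU)
  have hρV := (Measure.mem_support_iff_forall y).1 hy V (hV.mem_nhds hyV)
  rw [Measure.restrict_apply hU.measurableSet] at hρU
  rw [Measure.restrict_apply hV.measurableSet] at hρV
  have hVs : V ∩ s ⊆ s \ (U ∩ s) := fun z hz =>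
    ⟨hz.2, fun hzU => hUV.ne_of_mem hzU.1 hz.1 rfl⟩
  exact ⟨U ∩ s, Set.inter_subset_right, hU.measurableSet.inter hs, hρU.ne',
    fun h0 => hρV.ne' (measure_mono_null hVs h0)⟩

lemma MeasureTheory.Measure.exists_seq_pairwise_disjoint_measure_ne_zero
    (hsplit : ∀ s, MeasurableSet s → μ s ≠ 0 →
      ∃ u ⊆ s, MeasurableSet u ∧ μ u ≠ 0 ∧ μ (s \ u) ≠ 0)
    (hμ : μ ≠ 0) :
    ∃ B : ℕ → Set α, (∀ n, MeasurableSet (B n) ∧ μ (B n) ≠ 0) ∧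
      Pairwise (Function.onFun Disjoint B) := by
  let Charged := {s : Set α // MeasurableSet s ∧ μ s ≠ 0}
  choose u hus hu hu0 hdiff using fun s : Charged => hsplit s.1 s.2.1 s.2.2
  let next : Charged → Charged := fun s => ⟨s.1 \ u s, s.2.1.diff (hu s), hdiff s⟩
  let rest : ℕ → Charged := fun n => next^[n] ⟨Set.univ, .univ, by simpa using hμ⟩
  have hrest_succ (n : ℕ) : (rest (n + 1)).1 = (rest n).1 \ u (rest n) :=
    congrArg Subtype.val (Function.iterate_succ_apply' next n _)
  have hanti : Antitone fun n => (rest n).1 :=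
    antitone_nat_of_succ_le fun n => (hrest_succ n).trans_subset Set.sdiff_subset
  refine ⟨fun n => u (rest n), fun n => ⟨hu _, hu0 _⟩, pairwise_disjoint_on _ |>.2 ?_⟩
  intro i j hij
  have hj : u (rest j) ⊆ (rest i).1 \ u (rest i) :=
    (hus _).trans ((hanti hij).trans_eq (hrest_succ i))
  exact Set.disjoint_sdiff_right.mono_right hj

end Splitting

section Marginal

variable {Z Y E : Type*} [MeasurableSpace Z] [MeasurableSpace Y] [NormedAddCommGroup E]
  {μ : Measure Z} {ν : Measure Y} {π : Z → Y} {f : Z → E}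

lemma MeasureTheory.Measure.map_withDensity_enorm_apply_eq_zero_iff (hπ : Measurable π)
    (hf : AEStronglyMeasurable f μ) {B : Set Y} (hB : MeasurableSet B) :
    (μ.withDensity fun z => ‖f z‖ₑ).map π B = 0 ↔ ∀ᵐ z ∂μ, π z ∈ B → f z = 0 := by
  rw [Measure.map_apply hπ hB, withDensity_apply _ (hπ hB),
    lintegral_eq_zero_iff' hf.enorm.restrict, EventuallyEq, ae_restrict_iff' (hπ hB)]
  simp

lemma exists_seq_pairwise_disjoint_not_ae_eq_zero_on_preimage [TopologicalSpace Y] [T2Space Y]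
    [HereditarilyLindelofSpace Y] [OpensMeasurableSpace Y] [NullSingletonClass ν]
    (hπ : Measure.QuasiMeasurePreserving π μ ν) (hf : AEStronglyMeasurable f μ)
    (hf0 : ¬ f =ᵐ[μ] 0) :
    ∃ B : ℕ → Set Y, (∀ n, MeasurableSet (B n)) ∧ Pairwise (Function.onFun Disjoint B) ∧
      ∀ n, ¬ ∀ᵐ z ∂μ, π z ∈ B n → f z = 0 := by
  -- `ρ` is nonatomic, and its null sets are the sets on whose preimage `f` vanishes a.e.
  set ρ := (μ.withDensity fun z => ‖f z‖ₑ).map π with hρ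
  have hρν : ρ ≪ ν :=
    ((withDensity_absolutelyContinuous μ _).map hπ.measurable).trans hπ.absolutelyContinuous
  have : NullSingletonClass ρ := ⟨fun y => hρν (measure_singleton y)⟩
  have hρ0 : ρ ≠ 0 := fun h0 => hf0 <| by
    have := (Measure.map_withDensity_enorm_apply_eq_zero_iff hπ.measurable hf .univ).1
      (by rw [← hρ, h0]; rfl)
    simpa [EventuallyEq] using this
  obtain ⟨B, hB, hdisj⟩ := Measure.exists_seq_pairwise_disjoint_measure_ne_zero
    (fun _ hs h => Measure.exists_subset_measure_ne_zero_and_diff hs h) hρ0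
  refine ⟨B, fun n => (hB n).1, hdisj, fun n => ?_⟩
  rw [← Measure.map_withDensity_enorm_apply_eq_zero_iff hπ.measurable hf (hB n).1]
  exact (hB n).2

end Marginal

lemma MeasureTheory.L2.inner_eq_zero_of_ae_eq_zero_or {Z 𝕜 E : Type*} [MeasurableSpace Z]
    {μ : Measure Z} [RCLike 𝕜] [NormedAddCommGroup E] [InnerProductSpace 𝕜 E] {g h : Lp E 2 μ}
    (hgh : ∀ᵐ z ∂μ, g z = 0 ∨ h z = 0) :
    inner 𝕜 g h = 0 := by
  rw [L2.inner_def]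
  refine integral_eq_zero_of_ae (hgh.mono fun z hz => ?_)
  rcases hz with hz | hz <;> simp [hz]

section MulSnd

variable {X Y : Type*} [MeasurableSpace X] [MeasurableSpace Y]

def CommutesWithMulSnd {μ : Measure (X × Y)} (A : Lp ℂ 2 μ →L[ℂ] Lp ℂ 2 μ) : Prop :=
  ∀ (ψ : Y → ℂ) (f g : Lp ℂ 2 μ), (g : X × Y → ℂ) =ᵐ[μ] (fun p => ψ p.2 * f p) →
    (A g : X × Y → ℂ) =ᵐ[μ] fun p => ψ p.2 * A f p

namespace CommutesWithMulSnd

variable {μ : Measure (X × Y)} {A B : Lp ℂ 2 μ →L[ℂ] Lp ℂ 2 μ}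

lemma of_ae_eq_mul (k : X × Y → ℂ) (hA : ∀ f, (A f : X × Y → ℂ) =ᵐ[μ] fun p => k p * f p) :
    CommutesWithMulSnd A := by
  intro ψ f g hg
  filter_upwards [hA f, hA g, hg] with p hAf hAg hgp
  rw [hAg, hgp, hAf]
  ring

lemma sub (hA : CommutesWithMulSnd A) (hB : CommutesWithMulSnd B) :
    CommutesWithMulSnd (A - B) := by
  intro ψ f g hg
  filter_upwards [Lp.coeFn_sub (A g) (B g), Lp.coeFn_sub (A f) (B f), hA ψ f g hg,
    hB ψ f g hg] with p hg' hf' hAp hBp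
  simp only [sub_apply, hg', hf', Pi.sub_apply, hAp, hBp]
  ring

lemma apply_eq_smul (hA : CommutesWithMulSnd A) {c : ℂ} {ψ : Y → ℂ} {f g : Lp ℂ 2 μ}
    (hf : A f = c • f) (hg : (g : X × Y → ℂ) =ᵐ[μ] fun p => ψ p.2 * f p) :
    A g = c • g := by
  refine Lp.ext ?_
  filter_upwards [hA ψ f g hg, hg, Lp.coeFn_smul c f, Lp.coeFn_smul c g] with p hAg hgp hcf hcg
  rw [hAg, hf, hcf, hcg, Pi.smul_apply, Pi.smul_apply, hgp, smul_eq_mul, smul_eq_mul]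
  ring

lemma of_ae_eq_integral {ν₁ : Measure X} {ν₂ : Measure Y} [SFinite ν₁] [SFinite ν₂]
    {A : Lp ℂ 2 (ν₁.prod ν₂) →L[ℂ] Lp ℂ 2 (ν₁.prod ν₂)} (k : X → X → ℂ)
    (hA : ∀ f, (A f : X × Y → ℂ) =ᵐ[ν₁.prod ν₂] fun p => ∫ s, k p.1 s * f (s, p.2) ∂ν₁) :
    CommutesWithMulSnd A := by
  intro ψ f g hg
  have hslice : ∀ᵐ p ∂ν₁.prod ν₂, ∀ᵐ s ∂ν₁, g (s, p.2) = ψ p.2 * f (s, p.2) :=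
    Measure.quasiMeasurePreserving_snd.ae <| Measure.ae_ae_of_ae_prod <|
      Measure.measurePreserving_swap.quasiMeasurePreserving.ae hg
  filter_upwards [hA f, hA g, hslice] with p hAf hAg hgp
  rw [hAg, hAf, ← integral_const_mul]
  refine integral_congr_ae (hgp.mono fun s hs => ?_)
  simp only [hs]
  ring

theorem not_finiteDimensional_eigenspace [TopologicalSpace Y] [T2Space Y]
    [HereditarilyLindelofSpace Y] [OpensMeasurableSpace Y] {ν : Measure Y} [NullSingletonClass ν]
    (hμ : Measure.QuasiMeasurePreserving Prod.snd μ ν) (hA : CommutesWithMulSnd A) {c : ℂ}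
    (hc : Module.End.HasEigenvalue (A : Lp ℂ 2 μ →ₗ[ℂ] Lp ℂ 2 μ) c) :
    ¬ FiniteDimensional ℂ (Module.End.eigenspace (A : Lp ℂ 2 μ →ₗ[ℂ] Lp ℂ 2 μ) c) := by
  intro hfin
  obtain ⟨f, hfE, hf0⟩ := hc.exists_hasEigenvector
  obtain ⟨B, hBm, hBdisj, hBf⟩ := exists_seq_pairwise_disjoint_not_ae_eq_zero_on_preimage hμ
    (Lp.aestronglyMeasurable f) (mt Lp.eq_zero_iff_ae_eq_zero.2 hf0)
  have hmem (n : ℕ) : MemLp ((Prod.snd ⁻¹' B n).indicator (f : X × Y → ℂ)) 2 μ :=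
    (Lp.memLp f).indicator (measurable_snd (hBm n))
  let g (n : ℕ) : Lp ℂ 2 μ := (hmem n).toLp
  have hg (n : ℕ) : (g n : X × Y → ℂ) =ᵐ[μ] fun p => (B n).indicator 1 p.2 * f p := by
    filter_upwards [(hmem n).coeFn_toLp] with p hp
    by_cases hpB : p.2 ∈ B n <;> simp [g, hp, hpB]
  have hg_mem (n : ℕ) : g n ∈ Module.End.eigenspace (A : Lp ℂ 2 μ →ₗ[ℂ] Lp ℂ 2 μ) c :=
    Module.End.mem_eigenspace_iff.2 <|
      hA.apply_eq_smul (Module.End.mem_eigenspace_iff.1 hfE) (hg n)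
  have hg_ne (n : ℕ) : g n ≠ 0 := fun h0 => hBf n <| by
    filter_upwards [hg n, Lp.eq_zero_iff_ae_eq_zero.1 h0] with p hp hp0 hpB
    simpa [hpB, hp0] using hp.symm
  have hg_orth : Pairwise fun i j => inner ℂ (g i) (g j) = 0 := fun i j hij =>
    L2.inner_eq_zero_of_ae_eq_zero_or <| by
      filter_upwards [hg i, hg j] with p hi hj
      by_cases hpB : p.2 ∈ B i
      · exact Or.inr (by simp [hj, Set.disjoint_left.1 (hBdisj hij) hpB])
      · exact Or.inl (by simp [hi, hpB])
  exact Module.Finite.not_linearIndependent_of_infinite (fun n => (⟨g n, hg_mem n⟩ : _))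
    (LinearIndependent.of_comp (Submodule.subtype _)
      (linearIndependent_of_ne_zero_of_inner_eq_zero hg_ne hg_orth))

end CommutesWithMulSnd

end MulSnd

lemma discreteSpectrum_eq_empty_of_forall_not_finiteDimensional {A : 𝓗 →L[ℂ] 𝓗}
    (h : ∀ z, Module.End.HasEigenvalue (A : 𝓗 →ₗ[ℂ] 𝓗) z →
      ¬ FiniteDimensional ℂ (Module.End.eigenspace (A : 𝓗 →ₗ[ℂ] 𝓗) z)) :
    discreteSpectrum A = ∅ :=
  Set.eq_empty_of_forall_notMem fun z ⟨_, hz, hfin⟩ => h z hz hfin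

section Setting

variable {d₁ d₂ : ℕ}
  {Ω₁ : Set (EuclideanSpace ℝ (Fin d₁))} {Ω₂ : Set (EuclideanSpace ℝ (Fin d₂))}

theorem discreteSpectrum_W₁_empty_general
    (ν₁ : Measure Ω₁) (ν₂ : Measure Ω₂) [IsFiniteMeasure ν₁] [IsFiniteMeasure ν₂]
    (k₁ : Ω₁ → Ω₁ → ℂ)
    (T₁ : Lp ℂ 2 (ν₁.prod ν₂) →L[ℂ] Lp ℂ 2 (ν₁.prod ν₂))
    (hT₁ : ∀ f : Lp ℂ 2 (ν₁.prod ν₂),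
      (T₁ f : Ω₁ × Ω₂ → ℂ) =ᵐ[ν₁.prod ν₂] fun p => ∫ s, k₁ p.1 s * f (s, p.2) ∂ν₁)
    (k₀ : Ω₁ × Ω₂ → ℝ)
    (H₀ : Lp ℂ 2 (ν₁.prod ν₂) →L[ℂ] Lp ℂ 2 (ν₁.prod ν₂))
    (hH₀ : ∀ f : Lp ℂ 2 (ν₁.prod ν₂),
      (H₀ f : Ω₁ × Ω₂ → ℂ) =ᵐ[ν₁.prod ν₂] fun p => (k₀ p : ℂ) * f p) :
    (∀ (lam : ℝ) (f : Lp ℂ 2 (ν₁.prod ν₂)), (H₀ - T₁) f = ((lam : ℝ) : ℂ) • f →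
      ∀ ψ : Ω₂ → ℂ, Measurable ψ → (∃ C : ℝ, ∀ᵐ y ∂ν₂, ‖ψ y‖ ≤ C) →
        ∀ g : Lp ℂ 2 (ν₁.prod ν₂),
          (g : Ω₁ × Ω₂ → ℂ) =ᵐ[ν₁.prod ν₂] (fun p => ψ p.2 * f p) →
          (H₀ - T₁) g = ((lam : ℝ) : ℂ) • g) ∧
    (NoAtoms ν₂ →
      (∀ lam : ℂ,
        Module.End.HasEigenvalue
          ((H₀ - T₁ : Lp ℂ 2 (ν₁.prod ν₂) →L[ℂ] Lp ℂ 2 (ν₁.prod ν₂)) :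
            Lp ℂ 2 (ν₁.prod ν₂) →ₗ[ℂ] Lp ℂ 2 (ν₁.prod ν₂)) lam →
        ¬ FiniteDimensional ℂ
          (Module.End.eigenspace
            ((H₀ - T₁ : Lp ℂ 2 (ν₁.prod ν₂) →L[ℂ] Lp ℂ 2 (ν₁.prod ν₂)) :
              Lp ℂ 2 (ν₁.prod ν₂) →ₗ[ℂ] Lp ℂ 2 (ν₁.prod ν₂)) lam)) ∧
      discreteSpectrum (H₀ - T₁) = ∅) := by
  have hW : CommutesWithMulSnd (H₀ - T₁) :=
    (CommutesWithMulSnd.of_ae_eq_mul _ hH₀).sub (CommutesWithMulSnd.of_ae_eq_integral k₁ hT₁)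
  refine ⟨fun lam f hf ψ _ _ g hg => hW.apply_eq_smul hf hg, fun hν₂ => ?_⟩
  have : NullSingletonClass ν₂ := hν₂
  have hinf (lam : ℂ) := hW.not_finiteDimensional_eigenspace (c := lam)
    Measure.quasiMeasurePreserving_snd
  exact ⟨hinf, discreteSpectrum_eq_empty_of_forall_not_finiteDimensional hinf⟩

/-- Eigenvalues of `W₁ = H₀ - T₁` are invariant under multiplication of eigenfunctions by
bounded measurable functions of the second variable; consequently, if `ν₂` is nonatomic,
every eigenvalue of `W₁` has infinite-dimensional eigenspace and `σ_d(W₁) = ∅`. -/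
theorem discreteSpectrum_W₁_empty
    (ν₁ : Measure Ω₁) (ν₂ : Measure Ω₂) [IsFiniteMeasure ν₁] [IsFiniteMeasure ν₂]
    (k₁ : Ω₁ → Ω₁ → ℂ)
    (T₁ : Lp ℂ 2 (ν₁.prod ν₂) →L[ℂ] Lp ℂ 2 (ν₁.prod ν₂))
    (hΩ₁ : IsCompact Ω₁) (hΩ₂ : IsCompact Ω₂)
    (hk₁c : Continuous fun p : Ω₁ × Ω₁ => k₁ p.1 p.2)
    (hk₁h : ∀ x s, k₁ x s = starRingEnd ℂ (k₁ s x))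
    (hT₁ : ∀ f : Lp ℂ 2 (ν₁.prod ν₂),
      (T₁ f : Ω₁ × Ω₂ → ℂ) =ᵐ[ν₁.prod ν₂] fun p => ∫ s, k₁ p.1 s * f (s, p.2) ∂ν₁)
    (k₀ : Ω₁ × Ω₂ → ℝ) (hk₀c : Continuous k₀)
    (H₀ : Lp ℂ 2 (ν₁.prod ν₂) →L[ℂ] Lp ℂ 2 (ν₁.prod ν₂))
    (hH₀ : ∀ f : Lp ℂ 2 (ν₁.prod ν₂),
      (H₀ f : Ω₁ × Ω₂ → ℂ) =ᵐ[ν₁.prod ν₂] fun p => (k₀ p : ℂ) * f p) :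
    (∀ (lam : ℝ) (f : Lp ℂ 2 (ν₁.prod ν₂)), (H₀ - T₁) f = ((lam : ℝ) : ℂ) • f →
      ∀ ψ : Ω₂ → ℂ, Measurable ψ → (∃ C : ℝ, ∀ᵐ y ∂ν₂, ‖ψ y‖ ≤ C) →
        ∀ g : Lp ℂ 2 (ν₁.prod ν₂),
          (g : Ω₁ × Ω₂ → ℂ) =ᵐ[ν₁.prod ν₂] (fun p => ψ p.2 * f p) →
          (H₀ - T₁) g = ((lam : ℝ) : ℂ) • g) ∧
    (NoAtoms ν₂ →
      (∀ lam : ℂ,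
        Module.End.HasEigenvalue
          ((H₀ - T₁ : Lp ℂ 2 (ν₁.prod ν₂) →L[ℂ] Lp ℂ 2 (ν₁.prod ν₂)) :
            Lp ℂ 2 (ν₁.prod ν₂) →ₗ[ℂ] Lp ℂ 2 (ν₁.prod ν₂)) lam →
        ¬ FiniteDimensional ℂ
          (Module.End.eigenspace
            ((H₀ - T₁ : Lp ℂ 2 (ν₁.prod ν₂) →L[ℂ] Lp ℂ 2 (ν₁.prod ν₂)) :
              Lp ℂ 2 (ν₁.prod ν₂) →ₗ[ℂ] Lp ℂ 2 (ν₁.prod ν₂)) lam)) ∧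
      discreteSpectrum (H₀ - T₁) = ∅) :=
  discreteSpectrum_W₁_empty_general ν₁ ν₂ k₁ T₁ hT₁ k₀ H₀ hH₀

end Setting

end
end
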